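/- Let d ≥ 2 and let u : ℝ^d → ℝ^d and g : ℝ^d → ℝ be C^∞ maps such that 𝓔u(x) = 2 g(x) (e₁⊙e₂) = g(x)(e₁⊗e₂ + e₂⊗e₁) for all x ∈ ℝ^d. Then there exist C^∞ functions h₁, h₂ : ℝ → ℝ and a vector v ∈ ℝ^d with v·e₁ = v·e₂ = 0 such that g(x) = (h₁(x₂) + h₂(x₁))/2 + x·v for all x ∈ ℝ^d; moreover there exist C^∞ functions H₁, H₂ : ℝ → ℝ with H₁' = h₁, H₂' = h₂, and a rigid deformation ω (i.e. ω(x) = u₀ + Ξx with Ξ skew-symmetric) such that u(x) = e₁(H₁(x₂) + x₂(x·v)) + e₂(H₂(x₁) + x₁(x·v)) − v·x₁x₂ + ω(x) for all x, where x₁ = x·e₁ and x₂ = x·e₂. -/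

import Mathlib

noncomputable def pd {d : ℕ} (k : Fin d) (f : (Fin d → ℝ) → ℝ) : (Fin d → ℝ) → ℝ :=
  fun x => fderiv ℝ f x (Pi.single k 1)

variable {d : ℕ}

lemma contDiff_pd (k : Fin d) {f : (Fin d → ℝ) → ℝ} (hf : ContDiff ℝ (⊤ : ℕ∞) f) :
    ContDiff ℝ (⊤ : ℕ∞) (pd k f) :=
  (hf.fderiv_right (by simp)).clm_apply contDiff_const

lemma clm_eq_sum (L : (Fin d → ℝ) →L[ℝ] ℝ) (w : Fin d → ℝ) :
    L w = ∑ k, w k * L (Pi.single k 1) := by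
  have : w = ∑ k, w k • (Pi.single k 1 : Fin d → ℝ) := by
    funext j; simp [Finset.sum_apply, Pi.single_apply]
  conv_lhs => rw [this]
  rw [map_sum]; simp

lemma fderiv_eq_sum_pd {f : (Fin d → ℝ) → ℝ} (x w : Fin d → ℝ) :
    fderiv ℝ f x w = ∑ k, w k * pd k f x := clm_eq_sum _ w

lemma pd_comm {f : (Fin d → ℝ) → ℝ} (hf : ContDiff ℝ (⊤ : ℕ∞) f) (j k : Fin d) (x : Fin d → ℝ) :
    pd k (pd j f) x = pd j (pd k f) x := by
  have hdf : DifferentiableAt ℝ (fderiv ℝ f) x :=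
    ((hf.fderiv_right (m := (⊤ : ℕ∞)) (by simp)).differentiable (by simp)).differentiableAt
  have e : ∀ (a b : Fin d), pd a (pd b f) x
      = fderiv ℝ (fderiv ℝ f) x (Pi.single a 1) (Pi.single b 1) := by
    intro a b
    have h2 : pd b f = fun y => (fderiv ℝ f y) (Pi.single b 1) := rfl
    rw [pd, h2, fderiv_clm_apply hdf (differentiableAt_const _)]
    simp
  rw [e, e]
  exact (hf.contDiffAt.isSymmSndFDerivAt (by rw [minSmoothness_of_isRCLikeNormedField]; exact WithTop.coe_le_coe.mpr le_top)) _ _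

lemma const_of_pd_eq_zero {f : (Fin d → ℝ) → ℝ} (hf : Differentiable ℝ f)
    (h : ∀ x k, pd k f x = 0) (x y : Fin d → ℝ) : f x = f y := by
  apply is_const_of_fderiv_eq_zero hf
  intro z
  ext w
  rw [clm_eq_sum]
  exact Finset.sum_eq_zero fun k _ => by
    rw [show (fderiv ℝ f z) (Pi.single k 1) = pd k f z from rfl, h z k, mul_zero]

lemma line_const {q : (Fin d → ℝ) → ℝ} (hq : Differentiable ℝ q) (a w : Fin d → ℝ)
    (hw : ∀ t : ℝ, ∀ k, w k * pd k q (a + t • w) = 0) : q (a + w) = q a := by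
  have hder : ∀ t : ℝ, HasDerivAt (fun s : ℝ => q (a + s • w)) 0 t := by
    intro t
    have hpath : HasDerivAt (fun s : ℝ => a + s • w) w t := by
      simpa using ((hasDerivAt_id t).smul_const w).const_add a
    have hcomp := (hq (a + t • w)).hasFDerivAt.comp_hasDerivAt t hpath
    have hval : fderiv ℝ q (a + t • w) w = 0 := by
      rw [fderiv_eq_sum_pd]
      exact Finset.sum_eq_zero fun k _ => hw t k
    rwa [hval] at hcomp
  have := is_const_of_deriv_eq_zero (f := fun s : ℝ => q (a + s • w))
    (fun t => (hder t).differentiableAt) (fun t => (hder t).deriv) 1 0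
  simpa using this

lemma eq_of_pd_eq {f k : (Fin d → ℝ) → ℝ} (hf : Differentiable ℝ f) (hk : Differentiable ℝ k)
    (h0 : f 0 = k 0) (hpd : ∀ x j, pd j f x = pd j k x) : ∀ x, f x = k x := by
  intro x
  have hz : (fun y => f y - k y) x = (fun y => f y - k y) 0 := by
    apply const_of_pd_eq_zero (hf.sub hk) _ x 0
    intro y j
    unfold pd
    rw [fderiv_sub (hf y) (hk y)]
    have := hpd y j
    unfold pd at this
    simp [this]
  simp only at hz
  have : f x - k x = f 0 - k 0 := hz
  linarith [this]

lemma pd_const (j : Fin d) (c : ℝ) (x : Fin d → ℝ) : pd j (fun _ => c) x = 0 := by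
  simp [pd]

lemma pd_add {f k : (Fin d → ℝ) → ℝ} (hf : Differentiable ℝ f) (hk : Differentiable ℝ k)
    (j : Fin d) (x : Fin d → ℝ) : pd j (fun y => f y + k y) x = pd j f x + pd j k x := by
  simp [pd, fderiv_fun_add (hf x) (hk x)]

lemma pd_sub {f k : (Fin d → ℝ) → ℝ} (hf : Differentiable ℝ f) (hk : Differentiable ℝ k)
    (j : Fin d) (x : Fin d → ℝ) : pd j (fun y => f y - k y) x = pd j f x - pd j k x := by
  simp [pd, fderiv_fun_sub (hf x) (hk x)]

lemma pd_const_mul {f : (Fin d → ℝ) → ℝ} (hf : Differentiable ℝ f) (c : ℝ)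
    (j : Fin d) (x : Fin d → ℝ) : pd j (fun y => c * f y) x = c * pd j f x := by
  simp [pd, fderiv_const_mul (hf x) c]

lemma pd_mul {f k : (Fin d → ℝ) → ℝ} (hf : Differentiable ℝ f) (hk : Differentiable ℝ k)
    (j : Fin d) (x : Fin d → ℝ) :
    pd j (fun y => f y * k y) x = f x * pd j k x + k x * pd j f x := by
  simp [pd, fderiv_fun_mul (hf x) (hk x)]

lemma pd_coord (a j : Fin d) (x : Fin d → ℝ) :
    pd j (fun y => y a) x = if j = a then 1 else 0 := by
  have : fderiv ℝ (fun y : Fin d → ℝ => y a) x = ContinuousLinearMap.proj a :=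
    (ContinuousLinearMap.proj a : (Fin d → ℝ) →L[ℝ] ℝ).fderiv
  simp [pd, this, Pi.single_apply, eq_comm]

lemma pd_comp_coord {F : ℝ → ℝ} (hF : Differentiable ℝ F) (a j : Fin d) (x : Fin d → ℝ) :
    pd j (fun y => F (y a)) x = (if j = a then 1 else 0) * deriv F (x a) := by
  have hp : HasFDerivAt (fun y : Fin d → ℝ => y a)
      (ContinuousLinearMap.proj a : (Fin d → ℝ) →L[ℝ] ℝ) x :=
    (ContinuousLinearMap.proj a : (Fin d → ℝ) →L[ℝ] ℝ).hasFDerivAt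
  have hc := ((hF (x a)).hasDerivAt).comp_hasFDerivAt x hp
  have h2 : (fun y : Fin d → ℝ => F (y a)) = F ∘ fun y => y a := rfl
  rw [pd, h2, hc.fderiv]
  by_cases hja : a = j
  · subst hja; simp [Pi.single_apply]
  · simp [Pi.single_apply, hja, Ne.symm hja]

lemma pd_sum_mul (v : Fin d → ℝ) (j : Fin d) (x : Fin d → ℝ) :
    pd j (fun y => ∑ i, y i * v i) x = v j := by
  have h : ∀ i : Fin d, i ∈ Finset.univ → Differentiable ℝ (fun y : Fin d → ℝ => y i * v i) :=
    fun i _ => (differentiable_apply i).mul_const (v i)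
  rw [pd, fderiv_fun_sum (fun i hi => (h i hi) x)]
  rw [ContinuousLinearMap.sum_apply]
  have key : ∀ i : Fin d, fderiv ℝ (fun y : Fin d → ℝ => y i * v i) x (Pi.single j 1)
      = (if j = i then 1 else 0) * v i := by
    intro i
    have h2 : (fun y : Fin d → ℝ => y i * v i) = fun y => v i * y i := by funext y; ring
    rw [h2, fderiv_const_mul ((differentiable_apply i) x)]
    have hfd : fderiv ℝ (fun y : Fin d → ℝ => y i) x = ContinuousLinearMap.proj i :=
      (ContinuousLinearMap.proj i : (Fin d → ℝ) →L[ℝ] ℝ).fderiv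
    by_cases hji : i = j
    · subst hji; simp [hfd, Pi.single_apply]
    · simp [hfd, Pi.single_apply, hji, Ne.symm hji]
  simp_rw [key]
  simp [Finset.sum_ite_eq]

lemma pd_comb3 {f1 f2 f3 : (Fin d → ℝ) → ℝ} (h1 : Differentiable ℝ f1)
    (h2 : Differentiable ℝ f2) (h3 : Differentiable ℝ f3) (a b e : ℝ) (j : Fin d)
    (x : Fin d → ℝ) :
    pd j (fun y => a * f1 y + b * f2 y - e * f3 y) x
      = a * pd j f1 x + b * pd j f2 x - e * pd j f3 x := by
  rw [pd_sub ((h1.const_mul a).fun_add (h2.const_mul b)) (h3.const_mul e),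
    pd_add (h1.const_mul a) (h2.const_mul b), pd_const_mul h1, pd_const_mul h2, pd_const_mul h3]

lemma pd_pi_apply {u : (Fin d → ℝ) → (Fin d → ℝ)} (hu : Differentiable ℝ u) (i j : Fin d)
    (x : Fin d → ℝ) : pd j (fun y => u y i) x = fderiv ℝ u x (Pi.single j 1) i := by
  have h1 : (fun y => u y i)
      = (ContinuousLinearMap.proj (R := ℝ) (φ := fun _ : Fin d => ℝ) i) ∘ u := rfl
  rw [pd, h1, fderiv_comp x (ContinuousLinearMap.proj i).differentiableAt (hu x),
    ContinuousLinearMap.fderiv]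
  rfl


lemma ite_and_mul_one (p q : Prop) [Decidable p] [Decidable q] :
    (if p ∧ q then (1:ℝ) else 0) = (if p then (1:ℝ) else 0) * (if q then 1 else 0) := by
  by_cases hp : p <;> by_cases hq : q <;> simp [hp, hq]

lemma entry_eq {d : ℕ} (i0 i1 : Fin d) (i j : Fin d) :
    ((Matrix.single i0 i1 (1:ℝ) + Matrix.single i1 i0 1) :
        Matrix (Fin d) (Fin d) ℝ) i j
      = (if i = i0 then (1:ℝ) else 0) * (if j = i1 then 1 else 0)
        + (if i = i1 then (1:ℝ) else 0) * (if j = i0 then 1 else 0) := by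
  have e : ∀ a b i j : Fin d, Matrix.single a b (1:ℝ) i j
      = (if i = a then (1:ℝ) else 0) * (if j = b then 1 else 0) := by
    intro a b i j
    rw [show Matrix.single a b (1:ℝ) i j = if a = i ∧ b = j then 1 else 0 from rfl,
      ite_and_mul_one]
    congr 1 <;> exact if_congr eq_comm rfl rfl
  rw [Matrix.add_apply, e, e]

/-- The symmetrized gradient `𝓔u(x) = (Du(x) + Du(x)ᵀ)/2`, where `(Du)_{ij} = ∂_j u_i`. -/
noncomputable def symGrad {d : ℕ} (u : (Fin d → ℝ) → (Fin d → ℝ)) (x : Fin d → ℝ) :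
    Matrix (Fin d) (Fin d) ℝ :=
  fun i j => (fderiv ℝ u x (Pi.single j 1) i + fderiv ℝ u x (Pi.single i 1) j) / 2

set_option maxHeartbeats 4000000 in
/-- Smooth rigidity for `P = e₁ ⊙ e₂`: if `𝓔u = 2g (e₁ ⊙ e₂) = g (e₁⊗e₂ + e₂⊗e₁)` with
`u, g` smooth on `ℝ^d`, `d ≥ 2`, then `g(x) = (h₁(x₂) + h₂(x₁))/2 + x·v` for smooth
`h₁, h₂` and a vector `v ⟂ e₁, e₂`, and
`u(x) = e₁(H₁(x₂) + x₂(x·v)) + e₂(H₂(x₁) + x₁(x·v)) − v x₁x₂ + ω(x)`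
with `H₁' = h₁`, `H₂' = h₂` and `ω` a rigid deformation. -/
theorem rigidity_e1_odot_e2 {d : ℕ} (hd : 2 ≤ d)
    (u : (Fin d → ℝ) → (Fin d → ℝ)) (g : (Fin d → ℝ) → ℝ)
    (hu : ContDiff ℝ (⊤ : ℕ∞) u) (hg : ContDiff ℝ (⊤ : ℕ∞) g)
    (h : ∀ x, symGrad u x =
      g x • (Matrix.single (⟨0, by omega⟩ : Fin d) (⟨1, by omega⟩ : Fin d) (1 : ℝ)
            + Matrix.single (⟨1, by omega⟩ : Fin d) (⟨0, by omega⟩ : Fin d) (1 : ℝ))) :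
    ∃ (h₁ h₂ : ℝ → ℝ) (v : Fin d → ℝ),
      ContDiff ℝ (⊤ : ℕ∞) h₁ ∧ ContDiff ℝ (⊤ : ℕ∞) h₂ ∧
      v ⟨0, by omega⟩ = 0 ∧ v ⟨1, by omega⟩ = 0 ∧
      (∀ x : Fin d → ℝ,
        g x = (h₁ (x ⟨1, by omega⟩) + h₂ (x ⟨0, by omega⟩)) / 2 + ∑ i, x i * v i) ∧
      ∃ (H₁ H₂ : ℝ → ℝ), ContDiff ℝ (⊤ : ℕ∞) H₁ ∧ ContDiff ℝ (⊤ : ℕ∞) H₂ ∧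
        deriv H₁ = h₁ ∧ deriv H₂ = h₂ ∧
        ∃ (u₀ : Fin d → ℝ) (Ξ : Matrix (Fin d) (Fin d) ℝ), Ξ.transpose = -Ξ ∧
          ∀ x : Fin d → ℝ,
            u x = (H₁ (x ⟨1, by omega⟩) + x ⟨1, by omega⟩ * ∑ i, x i * v i) •
                    (Pi.single (⟨0, by omega⟩ : Fin d) 1 : Fin d → ℝ)
                + (H₂ (x ⟨0, by omega⟩) + x ⟨0, by omega⟩ * ∑ i, x i * v i) •
                    (Pi.single (⟨1, by omega⟩ : Fin d) 1 : Fin d → ℝ)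
                - (x ⟨0, by omega⟩ * x ⟨1, by omega⟩) • v
                + (u₀ + Ξ.mulVec x) := by
  have hd0 : 0 < d := by omega
  have hd1 : 1 < d := by omega
  set i0 : Fin d := ⟨0, hd0⟩ with hi0def
  set i1 : Fin d := ⟨1, hd1⟩ with hi1def
  have hne : i0 ≠ i1 := by simp [hi0def, hi1def, Fin.ext_iff]
  set dl : Fin d → Fin d → ℝ := fun a b => if a = b then 1 else 0 with hdl
  set c : Fin d → Fin d → ℝ := fun i j => dl i i0 * dl j i1 + dl i i1 * dl j i0 with hc
  have hcsymm : ∀ i j, c i j = c j i := by intro i j; simp only [hc]; ring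
  set ui : Fin d → (Fin d → ℝ) → ℝ := fun i x => u x i with huidef
  have hui : ∀ i, ContDiff ℝ (⊤ : ℕ∞) (ui i) := fun i => contDiff_pi.1 hu i
  have huid : ∀ i, Differentiable ℝ (ui i) := fun i => (hui i).differentiable (by simp)
  have hgd : Differentiable ℝ g := hg.differentiable (by simp)
  have hud : Differentiable ℝ u := hu.differentiable (by simp)
  -- scalar form of the hypothesis
  have hsym : ∀ x i j, pd j (ui i) x + pd i (ui j) x = 2 * (g x * c i j) := by
    intro x i j
    have hx := congrFun (congrFun (h x) i) j
    simp only [symGrad] at hx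
    rw [Matrix.smul_apply, entry_eq i0 i1 i j, smul_eq_mul] at hx
    rw [show (fderiv ℝ u x) (Pi.single j 1) i = pd j (ui i) x from (pd_pi_apply hud i j x).symm,
        show (fderiv ℝ u x) (Pi.single i 1) j = pd i (ui j) x from
          (pd_pi_apply hud j i x).symm] at hx
    simp only [hc, hdl]
    linear_combination 2 * hx
  -- smoothness of partials
  have hpduid : ∀ i j, Differentiable ℝ (pd j (ui i)) :=
    fun i j => (contDiff_pd j (hui i)).differentiable (by simp)
  have hpdgd : ∀ m, Differentiable ℝ (pd m g) := fun m => (contDiff_pd m hg).differentiable (by simp)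
  -- first partials in terms of g
  have hrw : ∀ i j, pd j (ui i) = fun y => (2 * c i j) * g y - pd i (ui j) y := by
    intro i j; funext y
    show pd j (ui i) y = (2 * c i j) * g y - pd i (ui j) y
    have := hsym y i j; linarith
  have KEY : ∀ i j k x, pd k (pd j (ui i)) x
      = c i j * pd k g x + c i k * pd j g x - c j k * pd i g x := by
    intro i j k x
    have A1 : pd k (pd j (ui i)) x = (2 * c i j) * pd k g x - pd k (pd i (ui j)) x := by
      rw [hrw i j, pd_sub (hgd.const_mul _) (hpduid j i), pd_const_mul hgd]
    have A2 : pd k (pd i (ui j)) x = pd i (pd k (ui j)) x := pd_comm (hui j) i k x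
    have A3 : pd i (pd k (ui j)) x = (2 * c j k) * pd i g x - pd i (pd j (ui k)) x := by
      rw [hrw j k, pd_sub (hgd.const_mul _) (hpduid k j), pd_const_mul hgd]
    have A4 : pd i (pd j (ui k)) x = pd j (pd i (ui k)) x := pd_comm (hui k) j i x
    have A5 : pd j (pd i (ui k)) x = (2 * c k i) * pd j g x - pd j (pd k (ui i)) x := by
      rw [hrw k i, pd_sub (hgd.const_mul _) (hpduid i k), pd_const_mul hgd]
    have A6 : pd j (pd k (ui i)) x = pd k (pd j (ui i)) x := pd_comm (hui i) k j x
    have hcki : c k i = c i k := hcsymm k i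
    rw [hcki] at A5
    linarith
  have hKf : ∀ i j k, pd k (pd j (ui i))
      = fun x => c i j * pd k g x + c i k * pd j g x - c j k * pd i g x := by
    intro i j k; funext x; exact KEY i j k x
  have hDsym : ∀ a b x, pd a (pd b g) x = pd b (pd a g) x := fun a b x => pd_comm hg b a x
  have STAR : ∀ i j k l x,
      c i k * pd l (pd j g) x - c j k * pd l (pd i g) x
        = c i l * pd k (pd j g) x - c j l * pd k (pd i g) x := by
    intro i j k l x
    have W1 : pd l (pd k (pd j (ui i))) x
        = c i j * pd l (pd k g) x + c i k * pd l (pd j g) x - c j k * pd l (pd i g) x := by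
      rw [hKf i j k]; exact pd_comb3 (hpdgd k) (hpdgd j) (hpdgd i) _ _ _ l x
    have W2 : pd l (pd k (pd j (ui i))) x = pd k (pd l (pd j (ui i))) x :=
      pd_comm (contDiff_pd j (hui i)) k l x
    have W3 : pd k (pd l (pd j (ui i))) x
        = c i j * pd k (pd l g) x + c i l * pd k (pd j g) x - c j l * pd k (pd i g) x := by
      rw [hKf i j l]; exact pd_comb3 (hpdgd l) (hpdgd j) (hpdgd i) _ _ _ k x
    have W4 : pd l (pd k g) x = pd k (pd l g) x := hDsym l k x
    rw [W4] at W1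
    linarith
  -- c values
  have hc01 : c i0 i1 = 1 := by simp [hc, hdl, hne]
  have hc10 : c i1 i0 = 1 := by simp [hc, hdl, Ne.symm hne]
  have hc00 : c i0 i0 = 0 := by simp [hc, hdl, hne, Ne.symm hne]
  have hc11 : c i1 i1 = 0 := by simp [hc, hdl, hne, Ne.symm hne]
  -- second derivatives of g vanish except pure (i0,i0) and (i1,i1)
  have caseA : ∀ a, a ≠ i0 → a ≠ i1 → ∀ b x, pd b (pd a g) x = 0 := by
    intro a h0 h1 b x
    have hca : ∀ t, c a t = 0 := fun t => by simp [hc, hdl, h0, h1]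
    have E2 : pd i1 (pd a g) x = 0 := by
      have S2 := STAR a i1 i0 i1 x
      rw [hca i0, hca i1, hc10, hc11] at S2
      linarith
    have E1 : pd b (pd a g) x = c i0 b * pd i1 (pd a g) x := by
      have S1 := STAR a i0 i1 b x
      rw [hca i1, hca b, hc01] at S1
      linarith
    rw [E1, E2, mul_zero]
  have case01 : ∀ x, pd i0 (pd i1 g) x = 0 := by
    intro x
    have S := STAR i0 i1 i1 i0 x
    rw [hc01, hc11, hc00, hc10] at S
    have := hDsym i1 i0 x
    linarith
  have Dzero : ∀ a b x, ¬(a = b ∧ (a = i0 ∨ a = i1)) → pd a (pd b g) x = 0 := by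
    intro a b x hcond
    by_cases hb0 : b = i0
    · subst hb0
      by_cases ha0 : a = i0
      · exact absurd ⟨ha0, Or.inl ha0⟩ hcond
      · by_cases ha1 : a = i1
        · subst ha1; rw [hDsym]; exact case01 x
        · rw [hDsym]; exact caseA a ha0 ha1 i0 x
    · by_cases hb1 : b = i1
      · subst hb1
        by_cases ha1 : a = i1
        · exact absurd ⟨ha1, Or.inr ha1⟩ hcond
        · by_cases ha0 : a = i0
          · subst ha0; exact case01 x
          · rw [hDsym]; exact caseA a ha0 ha1 i1 x
      · exact caseA b hb0 hb1 a x
  -- the constant gradient components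
  set v : Fin d → ℝ := fun m => if m = i0 ∨ m = i1 then 0 else pd m g 0 with hv
  have hv0 : v i0 = 0 := by simp [hv]
  have hv1 : v i1 = 0 := by simp [hv]
  have hvconst : ∀ m, m ≠ i0 → m ≠ i1 → ∀ x, pd m g x = v m := by
    intro m h0 h1 x
    have hconst : pd m g x = pd m g 0 := by
      apply const_of_pd_eq_zero (hpdgd m) _ x 0
      intro y k
      refine Dzero k m y ?_
      rintro ⟨rfl, hk | hk⟩
      · exact h0 hk
      · exact h1 hk
    rw [hconst]; simp [hv, h0, h1]
  -- pd i0 g and pd i1 g only depend on the respective coordinate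
  have hproj : ∀ p : Fin d, (∀ k y, k ≠ p → pd k (pd p g) y = 0) →
      ∀ x, pd p g x = pd p g (x p • (Pi.single p 1 : Fin d → ℝ)) := by
    intro p hker x
    have hsplit : x p • (Pi.single p 1 : Fin d → ℝ)
        + (x - x p • (Pi.single p 1 : Fin d → ℝ)) = x := by abel
    have hl := line_const (hpdgd p) (x p • (Pi.single p 1 : Fin d → ℝ))
      (x - x p • (Pi.single p 1 : Fin d → ℝ)) ?_
    · rw [hsplit] at hl; exact hl
    · intro t k
      by_cases hk : k = p
      · subst hk; simp [Pi.single_apply]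
      · rw [hker k _ hk, mul_zero]
  have hp0 : ∀ x, pd i0 g x = pd i0 g (x i0 • (Pi.single i0 1 : Fin d → ℝ)) := by
    refine hproj i0 ?_
    intro k y hk
    exact Dzero k i0 y (by rintro ⟨rfl, _⟩; exact hk rfl)
  have hp1 : ∀ x, pd i1 g x = pd i1 g (x i1 • (Pi.single i1 1 : Fin d → ℝ)) := by
    refine hproj i1 ?_
    intro k y hk
    exact Dzero k i1 y (by rintro ⟨rfl, _⟩; exact hk rfl)
  set h₁ : ℝ → ℝ := fun s => 2 * g (s • (Pi.single i1 1 : Fin d → ℝ)) - g 0 with hh1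
  set h₂ : ℝ → ℝ := fun t => 2 * g (t • (Pi.single i0 1 : Fin d → ℝ)) - g 0 with hh2
  have hcurve : ∀ e : Fin d → ℝ, ContDiff ℝ (⊤ : ℕ∞) (fun s : ℝ => s • e) :=
    fun e => contDiff_id.smul contDiff_const
  have hh1smooth : ContDiff ℝ (⊤ : ℕ∞) h₁ :=
    (contDiff_const.mul (hg.comp (hcurve _))).sub contDiff_const
  have hh2smooth : ContDiff ℝ (⊤ : ℕ∞) h₂ :=
    (contDiff_const.mul (hg.comp (hcurve _))).sub contDiff_const
  have hh1d : Differentiable ℝ h₁ := hh1smooth.differentiable (by simp)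
  have hh2d : Differentiable ℝ h₂ := hh2smooth.differentiable (by simp)
  have hhderiv : ∀ (ev : Fin d → ℝ) (t : ℝ),
      HasDerivAt (fun s : ℝ => 2 * g (s • ev) - g 0) (2 * fderiv ℝ g (t • ev) ev) t := by
    intro ev t
    have hpath : HasDerivAt (fun s : ℝ => s • ev) ev t := by
      simpa using (hasDerivAt_id t).smul_const ev
    have hcomp : HasDerivAt (fun s : ℝ => g (s • ev)) (fderiv ℝ g (t • ev) ev) t :=
      (hgd _).hasFDerivAt.comp_hasDerivAt t hpath
    exact (hcomp.const_mul 2).sub_const (g 0)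
  have hh1deriv : ∀ t, deriv h₁ t
      = 2 * pd i1 g (t • (Pi.single i1 1 : Fin d → ℝ)) := by
    intro t
    rw [hh1]
    exact (hhderiv (Pi.single i1 1) t).deriv
  have hh2deriv : ∀ t, deriv h₂ t
      = 2 * pd i0 g (t • (Pi.single i0 1 : Fin d → ℝ)) := by
    intro t
    rw [hh2]
    exact (hhderiv (Pi.single i0 1) t).deriv
  have hG : ∀ x m, pd m g x = (if m = i0 then (1:ℝ) else 0) * pd i0 g x
      + (if m = i1 then (1:ℝ) else 0) * pd i1 g x + v m := by
    intro x m
    by_cases h0 : m = i0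
    · subst h0; simp [hne, hv0]
    · by_cases h1 : m = i1
      · subst h1; simp [Ne.symm hne, hv1]
      · rw [hvconst m h0 h1 x]; simp [h0, h1]
  set S : (Fin d → ℝ) → ℝ := fun y => ∑ i, y i * v i with hS
  have hSd : Differentiable ℝ S := by
    rw [hS]; exact Differentiable.fun_sum fun i _ => (differentiable_apply i).mul_const (v i)
  have hSpd : ∀ x j, pd j S x = v j := by
    intro x j; rw [hS]; exact pd_sum_mul v j x
  have hS0 : S 0 = 0 := by simp [hS]
  have hc1d : Differentiable ℝ (fun y : Fin d → ℝ => h₁ (y i1)) :=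
    hh1d.comp (differentiable_apply i1)
  have hc2d : Differentiable ℝ (fun y : Fin d → ℝ => h₂ (y i0)) :=
    hh2d.comp (differentiable_apply i0)
  have gform0 : ∀ x, g x = (1/2) * h₁ (x i1) + (1/2) * h₂ (x i0) + S x := by
    refine eq_of_pd_eq hgd ?_ ?_ ?_
    · exact ((hc1d.const_mul _).add (hc2d.const_mul _)).add hSd
    · have e1 : h₁ ((0 : Fin d → ℝ) i1) = g 0 := by
        rw [hh1]; simp only [Pi.zero_apply, zero_smul]; ring
      have e2 : h₂ ((0 : Fin d → ℝ) i0) = g 0 := by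
        rw [hh2]; simp only [Pi.zero_apply, zero_smul]; ring
      rw [e1, e2, hS0]; ring
    · intro x j
      have hA : pd j (fun y : Fin d → ℝ => (1/2) * h₁ (y i1) + (1/2) * h₂ (y i0) + S y) x
          = ((1/2) * ((if j = i1 then (1:ℝ) else 0) * deriv h₁ (x i1))
            + (1/2) * ((if j = i0 then (1:ℝ) else 0) * deriv h₂ (x i0))) + v j := by
        rw [pd_add ((hc1d.const_mul _).fun_add (hc2d.const_mul _)) hSd,
          pd_add (hc1d.const_mul _) (hc2d.const_mul _),
          pd_const_mul hc1d, pd_const_mul hc2d,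
          pd_comp_coord hh1d i1 j x, pd_comp_coord hh2d i0 j x, hSpd x j]
      rw [hA, hh1deriv (x i1), hh2deriv (x i0), ← hp1 x, ← hp0 x, hG x j]
      ring
  have gform : ∀ x, g x = (h₁ (x i1) + h₂ (x i0)) / 2 + S x := by
    intro x; rw [gform0 x]; ring
  -- the skew matrix
  set Xi : Matrix (Fin d) (Fin d) ℝ :=
    Matrix.of fun i j => (pd j (ui i) 0 - pd i (ui j) 0) / 2 with hXi
  have hXiapp : ∀ i j, Xi i j = (pd j (ui i) 0 - pd i (ui j) 0) / 2 := fun i j => rfl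
  have hskew : Xi.transpose = -Xi := by
    ext i j
    rw [Matrix.transpose_apply, Matrix.neg_apply, hXiapp, hXiapp]; ring
  -- first derivative profile
  set P : Fin d → Fin d → (Fin d → ℝ) → ℝ := fun i j y =>
    (dl i i0 * dl j i1) * (h₁ (y i1) + S y) + (dl i i1 * dl j i0) * (h₂ (y i0) + S y)
      + ((dl i i0 * v j - dl j i0 * v i) * y i1
        + ((dl i i1 * v j - dl j i1 * v i) * y i0 + Xi i j)) with hP
  have hPd : ∀ i j, Differentiable ℝ (P i j) := by
    intro i j
    simp only [hP]
    exact (((hc1d.add hSd).const_mul _).add ((hc2d.add hSd).const_mul _)).add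
      (((differentiable_apply i1).const_mul _).add
        (((differentiable_apply i0).const_mul _).add (differentiable_const _)))
  have hPpd : ∀ i j k x, pd k (P i j) x =
      (dl i i0 * dl j i1) * ((if k = i1 then (1:ℝ) else 0) * deriv h₁ (x i1) + v k)
      + (dl i i1 * dl j i0) * ((if k = i0 then (1:ℝ) else 0) * deriv h₂ (x i0) + v k)
      + ((dl i i0 * v j - dl j i0 * v i) * (if k = i1 then 1 else 0)
        + (dl i i1 * v j - dl j i1 * v i) * (if k = i0 then 1 else 0)) := by
    intro i j k x
    simp only [hP]
    rw [pd_add (((hc1d.fun_add hSd).const_mul _).fun_add ((hc2d.fun_add hSd).const_mul _))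
        (((differentiable_apply i1).const_mul _).fun_add
          (((differentiable_apply i0).const_mul _).fun_add (differentiable_const _))),
      pd_add ((hc1d.fun_add hSd).const_mul _) ((hc2d.fun_add hSd).const_mul _),
      pd_const_mul (hc1d.fun_add hSd), pd_const_mul (hc2d.fun_add hSd),
      pd_add hc1d hSd, pd_add hc2d hSd,
      pd_comp_coord hh1d i1 k x, pd_comp_coord hh2d i0 k x, hSpd x k,
      pd_add ((differentiable_apply i1).const_mul _)
        (((differentiable_apply i0).const_mul _).fun_add (differentiable_const _)),
      pd_add ((differentiable_apply i0).const_mul _) (differentiable_const _),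
      pd_const_mul (differentiable_apply i1), pd_const_mul (differentiable_apply i0),
      pd_coord i1 k x, pd_coord i0 k x, pd_const]
    ring
  have hh10 : h₁ 0 = g 0 := by rw [hh1]; simp only [zero_smul]; ring
  have hh20 : h₂ 0 = g 0 := by rw [hh2]; simp only [zero_smul]; ring
  have step1 : ∀ i j x, pd j (ui i) x = P i j x := by
    intro i j
    refine eq_of_pd_eq (hpduid i j) (hPd i j) ?_ ?_
    · have hP0 : P i j 0 = (dl i i0 * dl j i1) * g 0 + (dl i i1 * dl j i0) * g 0 + Xi i j := by
        simp only [hP, Pi.zero_apply, hh10, hh20, hS0]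
        ring
      rw [hP0, hXiapp]
      have hs0 := hsym 0 i j
      simp only [hc] at hs0
      linarith
    · intro x k
      rw [KEY i j k x, hPpd i j k x, hh1deriv (x i1), hh2deriv (x i0), ← hp1 x, ← hp0 x,
        hG x k, hG x j, hG x i]
      simp only [hc, hdl]
      by_cases hii0 : i = i0 <;> by_cases hii1 : i = i1 <;> by_cases hji0 : j = i0 <;>
        by_cases hji1 : j = i1 <;> by_cases hki0 : k = i0 <;> by_cases hki1 : k = i1 <;>
        first
          | exact (hne (hii0.symm.trans hii1)).elim
          | exact (hne (hji0.symm.trans hji1)).elim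
          | exact (hne (hki0.symm.trans hki1)).elim
          | (simp only [hii0, hii1, hji0, hji1, hki0, hki1, if_true, if_false, eq_self_iff_true,
              if_neg, if_pos, hne, Ne.symm hne, hv0, hv1, ite_true, ite_false]
             simp [hii0, hii1, hji0, hji1, hki0, hki1, hv0, hv1]
             try ring)
  -- antiderivatives extracted from u itself
  set H₁ : ℝ → ℝ :=
    fun t => u (t • (Pi.single i1 1 : Fin d → ℝ)) i0 - u 0 i0 - t * Xi i0 i1 with hH1b
  set H₂ : ℝ → ℝ :=
    fun t => u (t • (Pi.single i0 1 : Fin d → ℝ)) i1 - u 0 i1 - t * Xi i1 i0 with hH2b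
  have hH1smooth : ContDiff ℝ (⊤ : ℕ∞) H₁ :=
    (((hui i0).comp (hcurve _)).sub contDiff_const).sub (contDiff_id.mul contDiff_const)
  have hH2smooth : ContDiff ℝ (⊤ : ℕ∞) H₂ :=
    (((hui i1).comp (hcurve _)).sub contDiff_const).sub (contDiff_id.mul contDiff_const)
  have hH1d : Differentiable ℝ H₁ := hH1smooth.differentiable (by simp)
  have hH2d : Differentiable ℝ H₂ := hH2smooth.differentiable (by simp)
  have hH10 : H₁ 0 = 0 := by rw [hH1b]; simp
  have hH20 : H₂ 0 = 0 := by rw [hH2b]; simp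
  have hSe1 : ∀ t : ℝ, S (t • (Pi.single i1 1 : Fin d → ℝ)) = 0 := by
    intro t; rw [hS]
    simp [Pi.single_apply, ite_mul, mul_ite, Finset.sum_ite_eq, hv1]
  have hSe0 : ∀ t : ℝ, S (t • (Pi.single i0 1 : Fin d → ℝ)) = 0 := by
    intro t; rw [hS]
    simp [Pi.single_apply, ite_mul, mul_ite, Finset.sum_ite_eq, hv0]
  have hH1deriv : ∀ t, HasDerivAt H₁ (h₁ t) t := by
    intro t
    have hpath : HasDerivAt (fun s : ℝ => s • (Pi.single i1 1 : Fin d → ℝ))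
        (Pi.single i1 1) t := by simpa using (hasDerivAt_id t).smul_const _
    have hcomp : HasDerivAt (fun s : ℝ => ui i0 (s • (Pi.single i1 1 : Fin d → ℝ)))
        (fderiv ℝ (ui i0) (t • (Pi.single i1 1 : Fin d → ℝ)) (Pi.single i1 1)) t :=
      ((huid i0) _).hasFDerivAt.comp_hasDerivAt t hpath
    have hval : fderiv ℝ (ui i0) (t • (Pi.single i1 1 : Fin d → ℝ)) (Pi.single i1 1)
        = h₁ t + Xi i0 i1 := by
      rw [show fderiv ℝ (ui i0) (t • (Pi.single i1 1 : Fin d → ℝ)) (Pi.single i1 1)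
          = pd i1 (ui i0) (t • (Pi.single i1 1 : Fin d → ℝ)) from rfl,
        step1 i0 i1 _]
      simp only [hP, hdl, hSe1]
      rw [show (t • (Pi.single i1 1 : Fin d → ℝ)) i1 = t by simp,
        show (t • (Pi.single i1 1 : Fin d → ℝ)) i0 = 0 by
          simp [Pi.single_apply, Ne.symm hne]]
      simp [hne, Ne.symm hne, hv0, hv1]
    have hder : HasDerivAt H₁
        (fderiv ℝ (ui i0) (t • (Pi.single i1 1 : Fin d → ℝ)) (Pi.single i1 1)
          - Xi i0 i1) t := by
      rw [hH1b]
      exact (hcomp.sub_const (u 0 i0)).sub (hasDerivAt_mul_const (Xi i0 i1))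
    rw [hval] at hder
    simpa using hder
  have hH2deriv : ∀ t, HasDerivAt H₂ (h₂ t) t := by
    intro t
    have hpath : HasDerivAt (fun s : ℝ => s • (Pi.single i0 1 : Fin d → ℝ))
        (Pi.single i0 1) t := by simpa using (hasDerivAt_id t).smul_const _
    have hcomp : HasDerivAt (fun s : ℝ => ui i1 (s • (Pi.single i0 1 : Fin d → ℝ)))
        (fderiv ℝ (ui i1) (t • (Pi.single i0 1 : Fin d → ℝ)) (Pi.single i0 1)) t :=
      ((huid i1) _).hasFDerivAt.comp_hasDerivAt t hpath
    have hval : fderiv ℝ (ui i1) (t • (Pi.single i0 1 : Fin d → ℝ)) (Pi.single i0 1)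
        = h₂ t + Xi i1 i0 := by
      rw [show fderiv ℝ (ui i1) (t • (Pi.single i0 1 : Fin d → ℝ)) (Pi.single i0 1)
          = pd i0 (ui i1) (t • (Pi.single i0 1 : Fin d → ℝ)) from rfl,
        step1 i1 i0 _]
      simp only [hP, hdl, hSe0]
      rw [show (t • (Pi.single i0 1 : Fin d → ℝ)) i0 = t by simp,
        show (t • (Pi.single i0 1 : Fin d → ℝ)) i1 = 0 by
          simp [Pi.single_apply, hne]]
      simp [hne, Ne.symm hne, hv0, hv1]
    have hder : HasDerivAt H₂
        (fderiv ℝ (ui i1) (t • (Pi.single i0 1 : Fin d → ℝ)) (Pi.single i0 1)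
          - Xi i1 i0) t := by
      rw [hH2b]
      exact (hcomp.sub_const (u 0 i1)).sub (hasDerivAt_mul_const (Xi i1 i0))
    rw [hval] at hder
    simpa using hder
  have hdH1 : deriv H₁ = h₁ := funext fun t => (hH1deriv t).deriv
  have hdH2 : deriv H₂ = h₂ := funext fun t => (hH2deriv t).deriv
  -- the explicit displacement
  set U : Fin d → (Fin d → ℝ) → ℝ := fun i y =>
    dl i i0 * (H₁ (y i1) + y i1 * S y) + dl i i1 * (H₂ (y i0) + y i0 * S y)
      + (- v i * (y i0 * y i1) + (u 0 i + ∑ j, y j * Xi i j)) with hU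
  have hUc1 : Differentiable ℝ (fun y : Fin d → ℝ => H₁ (y i1)) :=
    hH1d.comp (differentiable_apply i1)
  have hUc2 : Differentiable ℝ (fun y : Fin d → ℝ => H₂ (y i0)) :=
    hH2d.comp (differentiable_apply i0)
  have hUd : ∀ i, Differentiable ℝ (U i) := by
    intro i
    simp only [hU]
    exact (((hUc1.add ((differentiable_apply i1).mul hSd)).const_mul _).add
        ((hUc2.add ((differentiable_apply i0).mul hSd)).const_mul _)).add
      ((((differentiable_apply i0).mul (differentiable_apply i1)).const_mul _).add
        ((differentiable_const _).add
          (Differentiable.fun_sum fun j _ => (differentiable_apply j).mul_const _)))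
  have hUpd : ∀ i k x, pd k (U i) x =
      dl i i0 * ((if k = i1 then (1:ℝ) else 0) * deriv H₁ (x i1)
        + (x i1 * v k + S x * (if k = i1 then 1 else 0)))
      + dl i i1 * ((if k = i0 then (1:ℝ) else 0) * deriv H₂ (x i0)
        + (x i0 * v k + S x * (if k = i0 then 1 else 0)))
      + (- v i * (x i0 * (if k = i1 then 1 else 0) + x i1 * (if k = i0 then 1 else 0))
        + Xi i k) := by
    intro i k x
    simp only [hU]
    rw [pd_add (((hUc1.fun_add ((differentiable_apply i1).fun_mul hSd)).const_mul _).fun_add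
        ((hUc2.fun_add ((differentiable_apply i0).fun_mul hSd)).const_mul _))
        ((((differentiable_apply i0).fun_mul (differentiable_apply i1)).const_mul _).fun_add
          ((differentiable_const _).fun_add
            (Differentiable.fun_sum fun j _ => (differentiable_apply j).mul_const _))),
      pd_add ((hUc1.fun_add ((differentiable_apply i1).fun_mul hSd)).const_mul _)
        ((hUc2.fun_add ((differentiable_apply i0).fun_mul hSd)).const_mul _),
      pd_const_mul (hUc1.fun_add ((differentiable_apply i1).fun_mul hSd)),
      pd_const_mul (hUc2.fun_add ((differentiable_apply i0).fun_mul hSd)),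
      pd_add hUc1 ((differentiable_apply i1).fun_mul hSd),
      pd_add hUc2 ((differentiable_apply i0).fun_mul hSd),
      pd_comp_coord hH1d i1 k x, pd_comp_coord hH2d i0 k x,
      pd_mul (differentiable_apply i1) hSd, pd_mul (differentiable_apply i0) hSd,
      hSpd x k, pd_coord i1 k x, pd_coord i0 k x,
      pd_add (((differentiable_apply i0).fun_mul (differentiable_apply i1)).const_mul _)
        ((differentiable_const _).fun_add
          (Differentiable.fun_sum fun j _ => (differentiable_apply j).mul_const _)),
      pd_const_mul ((differentiable_apply i0).fun_mul (differentiable_apply i1)),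
      pd_mul (differentiable_apply i0) (differentiable_apply i1),
      pd_add (differentiable_const _)
        (Differentiable.fun_sum fun j _ => (differentiable_apply j).mul_const _),
      pd_const, pd_sum_mul (fun j => Xi i j) k x, pd_coord i1 k x, pd_coord i0 k x]
    ring
  have step2 : ∀ i x, ui i x = U i x := by
    intro i
    refine eq_of_pd_eq (huid i) (hUd i) ?_ ?_
    · simp only [hU, Pi.zero_apply, hH10, hH20, hS0]
      simp [huidef]
    · intro x k
      rw [step1 i k x, hUpd i k x, hdH1, hdH2]
      simp only [hP, hdl]
      by_cases hii0 : i = i0 <;> by_cases hii1 : i = i1 <;> by_cases hki0 : k = i0 <;>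
        by_cases hki1 : k = i1 <;>
        first
          | exact (hne (hii0.symm.trans hii1)).elim
          | exact (hne (hki0.symm.trans hki1)).elim
          | (simp [hii0, hii1, hki0, hki1, hv0, hv1, hne, Ne.symm hne]
             try ring)
  refine ⟨h₁, h₂, v, hh1smooth, hh2smooth, hv0, hv1, ?_, H₁, H₂, hH1smooth, hH2smooth,
    hdH1, hdH2, u 0, Xi, hskew, ?_⟩
  · exact gform
  · intro x
    funext j
    rw [show u x j = U j x from step2 j x]
    simp only [hU, hdl, hS, Pi.add_apply, Pi.sub_apply, Pi.smul_apply, smul_eq_mul,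
      Pi.single_apply, Matrix.mulVec, dotProduct]
    have hsum : ∑ t, Xi j t * x t = ∑ t, x t * Xi j t :=
      Finset.sum_congr rfl fun t _ => mul_comm _ _
    rw [hsum]
    ring
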